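/- Finite termination of the labeling algorithm: in a finite directed network with source s, sink t, and positive integer edge capacities, the procedure that starts from the zero flow and repeatedly augments along an f-augmenting path by its leeway terminates after finitely many iterations (since each augmentation increases the integer-valued flow value by at least 1 and the value is bounded above by the capacity of any source/sink cut), and the flow at termination is a maximum flow. -/
import Mathlib

set_option linter.unusedSectionVars false
set_option linter.unusedVariables false

lemma exists_walk {V : Type*} {R : V → V → Prop} {s v : V}
    (h : Relation.ReflTransGen R s v) :
    ∃ (n : ℕ) (w : ℕ → V), w 0 = s ∧ w n = v ∧ ∀ i, i < n → R (w i) (w (i+1)) := by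
  induction h with
  | refl => exact ⟨0, fun _ => s, rfl, rfl, by omega⟩
  | @tail b cc hb hbc ih =>
      obtain ⟨n, w, h0, hn, hs⟩ := ih
      refine ⟨n+1, fun m => if m ≤ n then w m else cc, ?_, ?_, ?_⟩
      · simp only [Nat.zero_le, if_pos]; exact h0
      · simp only [if_neg (by omega : ¬ n+1 ≤ n)]
      · intro i hi
        rcases Nat.lt_or_ge i n with h' | h'
        · simp only [if_pos (le_of_lt h'), if_pos (by omega : i+1 ≤ n)]
          exact hs i h'
        · have hin : i = n := by omega
          subst hin
          simp only [if_pos (le_refl i), if_neg (by omega : ¬ i+1 ≤ i)]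
          exact hn ▸ hbc

lemma exists_injective_walk {V : Type*} {R : V → V → Prop} {s v : V}
    (h : Relation.ReflTransGen R s v) :
    ∃ (n : ℕ) (w : ℕ → V), w 0 = s ∧ w n = v ∧ (∀ i, i < n → R (w i) (w (i+1))) ∧
      (∀ i j, i ≤ n → j ≤ n → w i = w j → i = j) := by
  classical
  have hex : ∃ n : ℕ, ∃ w : ℕ → V, w 0 = s ∧ w n = v ∧ ∀ i, i < n → R (w i) (w (i+1)) := by
    obtain ⟨n, w, h0, hn, hs⟩ := exists_walk h
    exact ⟨n, w, h0, hn, hs⟩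
  set n := Nat.find hex with hndef
  obtain ⟨w, h0, hn, hs⟩ := Nat.find_spec hex
  refine ⟨n, w, h0, hn, hs, ?_⟩
  have key : ∀ i j, i < j → j ≤ n → w i = w j → False := by
    intro i j hij hj heq
    apply Nat.find_min hex (show n - (j - i) < n by omega)
    refine ⟨fun m => if m ≤ i then w m else w (m + (j - i)), ?_, ?_, ?_⟩
    · beta_reduce; simp only [Nat.zero_le, if_pos]; exact h0
    · beta_reduce
      by_cases hcc : n - (j-i) ≤ i
      · have h1 : n = j := by omega
        have h2 : n - (j-i) = i := by omega
        rw [if_pos hcc, h2, heq, ← h1] at *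
        exact hn
      · rw [if_neg hcc]
        have he : n - (j-i) + (j-i) = n := by omega
        rw [he]; exact hn
    · intro m hm
      beta_reduce
      rcases Nat.lt_trichotomy m i with h' | h' | h'
      · rw [if_pos (by omega), if_pos (by omega)]
        exact hs m (by omega)
      · rw [if_pos (by omega : m ≤ i), if_neg (by omega : ¬ m + 1 ≤ i)]
        have he : m + 1 + (j - i) = j + 1 := by omega
        have heq' : w m = w j := by rw [h', heq]
        rw [he, heq']
        exact hs j (by omega)
      · rw [if_neg (by omega), if_neg (by omega)]
        have he : m + 1 + (j-i) = m + (j-i) + 1 := by omega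
        rw [he]
        exact hs (m + (j-i)) (by omega)
  intro i j hi hj heq
  rcases Nat.lt_trichotomy i j with h' | h' | h'
  · exact absurd (key i j h' hj heq) (fun x => x)
  · exact h'
  · exact absurd (key j i h' hi heq.symm) (fun x => x)




/-- A feasible (integer-valued) flow: `0 ≤ f e ≤ c e` on every edge. -/
def FeasibleFlow {V : Type*} (c f : V → V → ℤ) : Prop :=
  ∀ u v, 0 ≤ f u v ∧ f u v ≤ c u v

/-- Flow conservation at every vertex other than the source `s` and the sink `t`:
total flow in equals total flow out. -/
def Conserved {V : Type*} [Fintype V] (f : V → V → ℤ) (s t : V) : Prop :=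
  ∀ v, v ≠ s → v ≠ t → ∑ u, f u v = ∑ w, f v w

/-- The value of a flow: the net flow out of the source `s`. -/
def flowValue {V : Type*} [Fintype V] (f : V → V → ℤ) (s : V) : ℤ :=
  ∑ w, f s w - ∑ u, f u s

/-- The data `(w, dir)` is an `f`-augmenting path from `s` to `t`: a path
`w 0 = s, …, w (last) = t` with distinct vertices in the underlying undirected
graph, each of whose steps is either a forward edge (`dir i = true`) with
`f e < c e` or a backward edge (`dir i = false`) with `f e > 0`. -/
def IsAugPath {V : Type*} (c f : V → V → ℤ) (s t : V)
    {k : ℕ} (w : Fin (k + 1) → V) (dir : Fin k → Bool) : Prop :=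
  Function.Injective w ∧ w 0 = s ∧ w (Fin.last k) = t ∧
  ∀ i : Fin k,
    (dir i = true → f (w i.castSucc) (w i.succ) < c (w i.castSucc) (w i.succ)) ∧
    (dir i = false → 0 < f (w i.succ) (w i.castSucc))

/-- The leeway of an augmenting path: the minimum over its steps of the
residual capacity `c e - f e` for forward edges and of the flow `f e` for
backward edges. -/
def leeway {V : Type*} (c f : V → V → ℤ)
    {k : ℕ} (hk : 0 < k) (w : Fin (k + 1) → V) (dir : Fin k → Bool) : ℤ :=
  Finset.univ.inf'
    (Finset.univ_nonempty_iff.mpr (Fin.pos_iff_nonempty.mp hk))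
    (fun i : Fin k =>
      if dir i then c (w i.castSucc) (w i.succ) - f (w i.castSucc) (w i.succ)
      else f (w i.succ) (w i.castSucc))

/-- One iteration of the labeling algorithm: `f'` is obtained from `f` by
augmenting along some `f`-augmenting path from `s` to `t` by its leeway, i.e.
by adding the leeway to the flow on each forward edge of the path and
subtracting it on each backward edge. -/
def AugStep {V : Type*} [Fintype V] [DecidableEq V]
    (c : V → V → ℤ) (s t : V) (f f' : V → V → ℤ) : Prop :=
  ∃ (k : ℕ) (hk : 0 < k) (w : Fin (k + 1) → V) (dir : Fin k → Bool),
    IsAugPath c f s t w dir ∧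
    ∀ a b, f' a b =
      f a b
        + (if ∃ i : Fin k, dir i = true ∧ w i.castSucc = a ∧ w i.succ = b
            then leeway c f hk w dir else 0)
        - (if ∃ i : Fin k, dir i = false ∧ w i.succ = a ∧ w i.castSucc = b
            then leeway c f hk w dir else 0)



section AuxAug
variable {V : Type*} [Fintype V] [DecidableEq V]

lemma leeway_ge_one {c f : V → V → ℤ} {s t : V} {k : ℕ} (hk : 0 < k)
    {w : Fin (k+1) → V} {dir : Fin k → Bool} (hp : IsAugPath c f s t w dir) :
    1 ≤ leeway c f hk w dir := by
  unfold leeway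
  apply Finset.le_inf'
  intro i _
  cases hdi : dir i with
  | false => have := (hp.2.2.2 i).2 hdi; simp [hdi]; omega
  | true => have := (hp.2.2.2 i).1 hdi; simp [hdi]; omega

lemma leeway_le {c f : V → V → ℤ} {k : ℕ} (hk : 0 < k)
    (w : Fin (k+1) → V) (dir : Fin k → Bool) (i : Fin k) :
    leeway c f hk w dir ≤ if dir i then c (w i.castSucc) (w i.succ) - f (w i.castSucc) (w i.succ)
      else f (w i.succ) (w i.castSucc) :=
  Finset.inf'_le _ (Finset.mem_univ i)

lemma augStep_main {c : V → V → ℤ} {s t : V} (hst : s ≠ t) {f f' : V → V → ℤ}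
    (hf : FeasibleFlow c f) (h : AugStep c s t f f') :
    FeasibleFlow c f' ∧ flowValue f s + 1 ≤ flowValue f' s := by
  obtain ⟨k, hk, w, dir, hp, hrec⟩ := h
  set L := leeway c f hk w dir with hL
  have hL1 : 1 ≤ L := leeway_ge_one hk hp
  have hinj := hp.1
  have hPQ : ∀ a b, (∃ i : Fin k, dir i = true ∧ w i.castSucc = a ∧ w i.succ = b) →
      (∃ i : Fin k, dir i = false ∧ w i.succ = a ∧ w i.castSucc = b) → False := by
    rintro a b ⟨i, _, hi1, hi2⟩ ⟨j, _, hj1, hj2⟩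
    have e1 : i.castSucc = j.succ := hinj (hi1.trans hj1.symm)
    have e2 : i.succ = j.castSucc := hinj (hi2.trans hj2.symm)
    have c1 : (i : ℕ) = (j : ℕ) + 1 := by
      have := congrArg Fin.val e1; simpa using this
    have c2 : (i : ℕ) + 1 = (j : ℕ) := by
      have := congrArg Fin.val e2; simpa using this
    omega
  have hfeas : FeasibleFlow c f' := by
    intro a b
    rw [hrec a b]
    by_cases hP : ∃ i : Fin k, dir i = true ∧ w i.castSucc = a ∧ w i.succ = b
    · have hQ : ¬ ∃ i : Fin k, dir i = false ∧ w i.succ = a ∧ w i.castSucc = b :=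
        fun hQ => hPQ a b hP hQ
      rw [if_pos hP, if_neg hQ]
      obtain ⟨i, hi, hia, hib⟩ := hP
      have hle := leeway_le (c := c) (f := f) hk w dir i
      rw [hi, if_pos rfl, hia, hib] at hle
      rw [← hL] at hle
      have h1 := (hf a b).1
      constructor <;> omega
    · rw [if_neg hP]
      by_cases hQ : ∃ i : Fin k, dir i = false ∧ w i.succ = a ∧ w i.castSucc = b
      · rw [if_pos hQ]
        obtain ⟨i, hi, hia, hib⟩ := hQ
        have hle := leeway_le (c := c) (f := f) hk w dir i
        rw [hi, if_neg (by simp), hia, hib] at hle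
        rw [← hL] at hle
        have h2 := (hf a b).2
        constructor <;> omega
      · rw [if_neg hQ]
        have := hf a b
        constructor <;> omega
  refine ⟨hfeas, ?_⟩
  set i0 : Fin k := ⟨0, hk⟩ with hi0
  have hcast0 : (i0.castSucc : Fin (k+1)) = 0 := by
    apply Fin.ext; simp [hi0]
  have hw0 : w i0.castSucc = s := by rw [hcast0]; exact hp.2.1
  have hsum_row : ∑ b, f' s b = ∑ b, f s b + (if dir i0 = true then L else 0) := by
    have hpt : ∀ b, f' s b = f s b + (if dir i0 = true ∧ b = w i0.succ then L else 0) := by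
      intro b
      rw [hrec s b]
      have hQ0 : ¬ ∃ i : Fin k, dir i = false ∧ w i.succ = s ∧ w i.castSucc = b := by
        rintro ⟨i, _, hi1, _⟩
        have : i.succ = (0 : Fin (k+1)) := hinj (hi1.trans hp.2.1.symm)
        exact (Fin.succ_ne_zero i) this
      rw [if_neg hQ0, sub_zero]
      have hiff : (∃ i : Fin k, dir i = true ∧ w i.castSucc = s ∧ w i.succ = b) ↔
          (dir i0 = true ∧ b = w i0.succ) := by
        constructor
        · rintro ⟨i, hi, h1, h2⟩
          have h0' : i.castSucc = (0 : Fin (k+1)) := hinj (h1.trans hp.2.1.symm)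
          have hii : i = i0 := by
            apply Fin.ext
            have := congrArg Fin.val h0'
            simpa [hi0] using this
          rw [hii] at hi h2
          exact ⟨hi, h2.symm⟩
        · rintro ⟨h1, h2⟩; exact ⟨i0, h1, hw0, h2.symm⟩
      simp only [hiff]
    rw [Finset.sum_congr rfl (fun b _ => hpt b), Finset.sum_add_distrib]
    congr 1
    by_cases hd : dir i0 = true
    · simp only [hd, true_and, if_pos]
      rw [Finset.sum_ite_eq' Finset.univ (w i0.succ) (fun _ => L)]
      simp
    · simp [hd]
  have hsum_col : ∑ a, f' a s = ∑ a, f a s - (if dir i0 = false then L else 0) := by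
    have hpt : ∀ a, f' a s = f a s - (if dir i0 = false ∧ a = w i0.succ then L else 0) := by
      intro a
      rw [hrec a s]
      have hP0 : ¬ ∃ i : Fin k, dir i = true ∧ w i.castSucc = a ∧ w i.succ = s := by
        rintro ⟨i, _, _, hi2⟩
        have : i.succ = (0 : Fin (k+1)) := hinj (hi2.trans hp.2.1.symm)
        exact (Fin.succ_ne_zero i) this
      rw [if_neg hP0, add_zero]
      have hiff : (∃ i : Fin k, dir i = false ∧ w i.succ = a ∧ w i.castSucc = s) ↔
          (dir i0 = false ∧ a = w i0.succ) := by
        constructor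
        · rintro ⟨i, hi, h1, h2⟩
          have h0' : i.castSucc = (0 : Fin (k+1)) := hinj (h2.trans hp.2.1.symm)
          have hii : i = i0 := by
            apply Fin.ext
            have := congrArg Fin.val h0'
            simpa [hi0] using this
          rw [hii] at hi h1
          exact ⟨hi, h1.symm⟩
        · rintro ⟨h1, h2⟩; exact ⟨i0, h1, h2.symm, hw0⟩
      simp only [hiff]
    rw [Finset.sum_congr rfl (fun a _ => hpt a), Finset.sum_sub_distrib]
    congr 1
    by_cases hd : dir i0 = false
    · simp only [hd, true_and, if_pos]
      rw [Finset.sum_ite_eq' Finset.univ (w i0.succ) (fun _ => L)]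
      simp
    · simp [hd]
  have hval : flowValue f' s = flowValue f s + L := by
    unfold flowValue
    rw [hsum_row, hsum_col]
    cases hd : dir i0 <;> simp [hd] <;> ring
  omega

end AuxAug

section AuxCut
variable {V : Type*} [Fintype V] [DecidableEq V]

lemma cut_value (h : V → V → ℤ) (s t : V) (hcons : Conserved h s t)
    (S : Finset V) (hs : s ∈ S) (ht : t ∉ S) :
    flowValue h s = ∑ u ∈ S, ∑ v ∈ Sᶜ, h u v - ∑ u ∈ Sᶜ, ∑ v ∈ S, h u v := by
  have key : ∑ v ∈ S, (∑ x, h v x - ∑ u, h u v) = flowValue h s := by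
    rw [Finset.sum_eq_single_of_mem s hs]
    · rfl
    · intro v hv hvs
      have hvt : v ≠ t := fun hh => ht (hh ▸ hv)
      have := hcons v hvs hvt
      omega
  have expand : ∀ v, (∑ x, h v x - ∑ u, h u v) =
      ((∑ x ∈ S, h v x + ∑ x ∈ Sᶜ, h v x) - (∑ u ∈ S, h u v + ∑ u ∈ Sᶜ, h u v)) := by
    intro v
    rw [Finset.sum_add_sum_compl, Finset.sum_add_sum_compl]
  rw [← key, Finset.sum_congr rfl (fun v _ => expand v), Finset.sum_sub_distrib,
    Finset.sum_add_distrib, Finset.sum_add_distrib]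
  have c1 : ∑ v ∈ S, ∑ u ∈ S, h u v = ∑ v ∈ S, ∑ x ∈ S, h v x := Finset.sum_comm
  have c2 : ∑ v ∈ S, ∑ u ∈ Sᶜ, h u v = ∑ u ∈ Sᶜ, ∑ v ∈ S, h u v := Finset.sum_comm
  rw [c1, c2]
  ring

end AuxCut

/-- Finite termination of the labeling algorithm with positive integer
capacities: there is no infinite run of the procedure that starts from the
zero flow and repeatedly augments along an augmenting path by its leeway
(each augmentation increases the integer flow value, which is bounded above),
and any flow at which the procedure terminates — i.e. any feasible flow
admitting no augmenting path from `s` to `t` — is a maximum flow. -/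
theorem labeling_algorithm_terminates_at_max_flow
    {V : Type*} [Fintype V] [DecidableEq V]
    (c : V → V → ℤ) (s t : V) (hst : s ≠ t)
    (hc : ∀ u v, 1 ≤ c u v) :
    (¬ ∃ f : ℕ → V → V → ℤ,
        (∀ a b, f 0 a b = 0) ∧ ∀ n, AugStep c s t (f n) (f (n + 1))) ∧
    (∀ f : V → V → ℤ, FeasibleFlow c f → Conserved f s t →
      (¬ ∃ (k : ℕ) (w : Fin (k + 1) → V) (dir : Fin k → Bool),
          IsAugPath c f s t w dir) →
      ∀ g : V → V → ℤ, FeasibleFlow c g → Conserved g s t →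
        flowValue g s ≤ flowValue f s) := by
  constructor
  · rintro ⟨f, h0, hstep⟩
    have hfv : ∀ n : ℕ, FeasibleFlow c (f n) ∧ (n : ℤ) ≤ flowValue (f n) s := by
      intro n
      induction n with
      | zero =>
          constructor
          · intro u v
            rw [h0 u v]
            exact ⟨le_refl 0, by linarith [hc u v]⟩
          · have : flowValue (f 0) s = 0 := by
              unfold flowValue
              rw [Finset.sum_congr rfl (fun x _ => h0 s x),
                Finset.sum_congr rfl (fun x _ => h0 x s)]
              simp
            rw [this]; exact le_refl 0
      | succ n ih =>
          obtain ⟨hfe, hv⟩ := ih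
          obtain ⟨hfe', hv'⟩ := augStep_main hst hfe (hstep n)
          refine ⟨hfe', ?_⟩
          push_cast
          linarith
    have hbound : ∀ n : ℕ, flowValue (f n) s ≤ ∑ v, c s v := by
      intro n
      have hfe := (hfv n).1
      have h1 : ∑ v, f n s v ≤ ∑ v, c s v := Finset.sum_le_sum fun v _ => (hfe s v).2
      have h2 : 0 ≤ ∑ u, f n u s := Finset.sum_nonneg fun u _ => (hfe u s).1
      unfold flowValue
      linarith
    set B : ℤ := ∑ v, c s v with hB
    have hB0 : 0 ≤ B := Finset.sum_nonneg fun v _ => by linarith [hc s v]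
    have hub := hbound (B.toNat + 1)
    have hlb := (hfv (B.toNat + 1)).2
    have hcast : ((B.toNat : ℤ)) = B := Int.toNat_of_nonneg hB0
    push_cast at hlb
    omega
  · intro f hf hcons hna g hg hgcons
    classical
    have ht : ¬ Relation.ReflTransGen (fun a b => f a b < c a b ∨ 0 < f b a) s t := by
      intro hreach
      obtain ⟨n, w, h0, hn, hstep, hinjw⟩ := exists_injective_walk hreach
      apply hna
      refine ⟨n, fun i => w i.val,
        fun i => decide (f (w i.val) (w (i.val+1)) < c (w i.val) (w (i.val+1))),
        ?_, ?_, ?_, ?_⟩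
      · intro a b hab
        exact Fin.ext (hinjw a.val b.val (Nat.lt_succ_iff.mp a.isLt)
          (Nat.lt_succ_iff.mp b.isLt) hab)
      · simpa using h0
      · simpa using hn
      · intro i
        constructor
        · intro hd
          have := of_decide_eq_true hd
          simpa [Fin.coe_castSucc, Fin.val_succ] using this
        · intro hd
          have hnot := of_decide_eq_false hd
          rcases hstep i.val i.isLt with h1 | h1
          · exact absurd h1 hnot
          · simpa [Fin.coe_castSucc, Fin.val_succ] using h1
    set S : Finset V :=
      Finset.univ.filter (fun v => Relation.ReflTransGen (fun a b => f a b < c a b ∨ 0 < f b a) s v)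
      with hS
    have hmem : ∀ v, v ∈ S ↔ Relation.ReflTransGen (fun a b => f a b < c a b ∨ 0 < f b a) s v := by
      intro v
      rw [hS, Finset.mem_filter]
      simp
    have hsS : s ∈ S := (hmem s).mpr Relation.ReflTransGen.refl
    have htS : t ∉ S := fun hh => ht ((hmem t).mp hh)
    have hcut_f := cut_value f s t hcons S hsS htS
    have hcut_g := cut_value g s t hgcons S hsS htS
    have hsat : ∀ u ∈ S, ∀ v ∈ Sᶜ, f u v = c u v := by
      intro u hu v hv
      by_contra hne
      have hlt : f u v < c u v := lt_of_le_of_ne (hf u v).2 hne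
      exact (Finset.mem_compl.mp hv)
        ((hmem v).mpr (((hmem u).mp hu).tail (Or.inl hlt)))
    have hzero : ∀ u ∈ Sᶜ, ∀ v ∈ S, f u v = 0 := by
      intro u hu v hv
      by_contra hne
      have hpos : 0 < f u v := lt_of_le_of_ne (hf u v).1 (Ne.symm hne)
      exact (Finset.mem_compl.mp hu)
        ((hmem u).mpr (((hmem v).mp hv).tail (Or.inr hpos)))
    have hfval : flowValue f s = ∑ u ∈ S, ∑ v ∈ Sᶜ, c u v := by
      rw [hcut_f]
      have h1 : ∑ u ∈ S, ∑ v ∈ Sᶜ, f u v = ∑ u ∈ S, ∑ v ∈ Sᶜ, c u v :=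
        Finset.sum_congr rfl fun u hu => Finset.sum_congr rfl fun v hv => hsat u hu v hv
      have h2 : ∑ u ∈ Sᶜ, ∑ v ∈ S, f u v = 0 :=
        Finset.sum_eq_zero fun u hu => Finset.sum_eq_zero fun v hv => hzero u hu v hv
      rw [h1, h2, sub_zero]
    have hgval : flowValue g s ≤ ∑ u ∈ S, ∑ v ∈ Sᶜ, c u v := by
      rw [hcut_g]
      have h1 : ∑ u ∈ S, ∑ v ∈ Sᶜ, g u v ≤ ∑ u ∈ S, ∑ v ∈ Sᶜ, c u v :=
        Finset.sum_le_sum fun u _ => Finset.sum_le_sum fun v _ => (hg u v).2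
      have h2 : 0 ≤ ∑ u ∈ Sᶜ, ∑ v ∈ S, g u v :=
        Finset.sum_nonneg fun u _ => Finset.sum_nonneg fun v _ => (hg u v).1
      linarith
    linarith
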